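/- arXiv:1909.12102 — 5 statements merged into one kernel-verified Lean document; each statement's English description precedes it below -/
import Mathlib

section
/- For every even N ≥ 4 there exists a relation R_N ⊆ {0,…,N−1}^2 with exactly N elements such that the number of maximal general (axis-aligned rectangular) gap boxes of R_N is at least (N/2)·(N/2+1). -/
/-!
Take `M = N / 2` and let `R` consist of the two antidiagonal segments `x + y = M - 1` and
`x + y = 3M - 1` of the grid `{0,…,2M−1}²`. A box `[a,b] × [c,e]` meets the line `x + y = s`
exactly when `a + c ≤ s ≤ b + e`, so every box whose lower-left corner lies on `x + y = M` and
whose upper-right corner lies on `x + y = 3M - 2` is a gap box, and it is maximal because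
moving any side outwards makes it meet one of the two segments. Choosing the lower-left corner
among `M + 1` positions and the upper-right one among `M` compatible positions gives
`M (M + 1)` distinct maximal gap boxes.
-/

open Finset

/-- A general (axis-aligned rectangular) box inside `{0,…,N−1}^2`:
a product of two integer intervals. -/
def GenBox (N : ℕ) (S : Set (ℕ × ℕ)) : Prop :=
  ∃ a b c e : ℕ, a ≤ b ∧ c ≤ e ∧ b < N ∧ e < N ∧ S = Set.Icc a b ×ˢ Set.Icc c e

def IsGapBox (N : ℕ) (R : Finset (ℕ × ℕ)) (S : Set (ℕ × ℕ)) : Prop :=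
  GenBox N S ∧ ∀ p ∈ S, p ∉ R

def IsMaximalGapBox (N : ℕ) (R : Finset (ℕ × ℕ)) (S : Set (ℕ × ℕ)) : Prop :=
  IsGapBox N R S ∧ ∀ S', IsGapBox N R S' → S ⊆ S' → S = S'

lemma setOf_genBox_finite (N : ℕ) : {S | GenBox N S}.Finite := by
  refine ((Set.finite_Iio N).prod (Set.finite_Iio N)).finite_subsets.subset ?_
  rintro S ⟨a, b, c, e, -, -, hb, he, rfl⟩ ⟨x, y⟩ ⟨hx, hy⟩
  exact ⟨hx.2.trans_lt hb, hy.2.trans_lt he⟩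

lemma Icc_prod_Icc_eq_Icc_prod_Icc_iff {a b c e a' b' c' e' : ℕ} (hab : a ≤ b) (hce : c ≤ e) :
    Set.Icc a b ×ˢ Set.Icc c e = Set.Icc a' b' ×ˢ Set.Icc c' e' ↔
      a = a' ∧ b = b' ∧ c = c' ∧ e = e' := by
  rw [Set.Icc_prod_Icc, Set.Icc_prod_Icc, Set.Icc_eq_Icc_iff (Prod.mk_le_mk.2 ⟨hab, hce⟩),
    Prod.ext_iff, Prod.ext_iff]
  tauto

lemma exists_mem_Icc_prod_Icc_add_eq {a b c e s : ℕ} (hab : a ≤ b) (hce : c ≤ e)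
    (hlo : a + c ≤ s) (hhi : s ≤ b + e) :
    ∃ p ∈ Set.Icc a b ×ˢ Set.Icc c e, p.1 + p.2 = s :=
  ⟨(max a (s - e), s - max a (s - e)), ⟨⟨le_max_left _ _, by omega⟩, by omega, by omega⟩,
    by omega⟩

/-- The relation `R_N` for `N = 2 * M`. -/
def doubleStaircase (M : ℕ) : Finset (ℕ × ℕ) :=
  (range M).image (fun i => (i, M - 1 - i)) ∪ (range M).image (fun i => (M + i, 2 * M - 1 - i))

lemma mem_doubleStaircase {M : ℕ} {p : ℕ × ℕ} :
    p ∈ doubleStaircase M ↔ ∃ i < M, p = (i, M - 1 - i) ∨ p = (M + i, 2 * M - 1 - i) := by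
  simp only [doubleStaircase, Finset.mem_union, Finset.mem_image, Finset.mem_range]
  grind

lemma doubleStaircase_subset_grid {M : ℕ} {p : ℕ × ℕ} (hp : p ∈ doubleStaircase M) :
    p.1 < 2 * M ∧ p.2 < 2 * M := by
  obtain ⟨i, hi, rfl | rfl⟩ := mem_doubleStaircase.1 hp <;> dsimp only <;> omega

lemma card_doubleStaircase (M : ℕ) : #(doubleStaircase M) = 2 * M := by
  rw [doubleStaircase, card_union_of_disjoint, Finset.card_image_of_injective,
    Finset.card_image_of_injective, card_range]
  · ring
  · intro i j h
    simpa using congrArg Prod.fst h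
  · intro i j h
    simpa using congrArg Prod.fst h
  · simp only [Finset.disjoint_left, Finset.mem_image, Finset.mem_range]
    rintro p ⟨i, hi, rfl⟩ ⟨j, hj, hp⟩
    have := congrArg Prod.fst hp
    dsimp only at this
    omega

lemma mk_mem_doubleStaircase_iff {M x y : ℕ} (hx : x < 2 * M) (hy : y < 2 * M) :
    (x, y) ∈ doubleStaircase M ↔ x + y = M - 1 ∨ x + y = 3 * M - 1 := by
  rw [mem_doubleStaircase]
  constructor
  · rintro ⟨i, hi, h | h⟩ <;> rw [Prod.ext_iff] at h <;> dsimp only at h <;> omega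
  · rintro (h | h)
    · exact ⟨x, by omega, Or.inl (Prod.ext rfl (by dsimp only; omega))⟩
    · exact ⟨x - M, by omega, Or.inr (Prod.ext (by dsimp only; omega) (by dsimp only; omega))⟩

lemma exists_mem_Icc_prod_Icc_mem_doubleStaircase {M a b c e s : ℕ} (hab : a ≤ b) (hce : c ≤ e)
    (hb : b < 2 * M) (he : e < 2 * M) (hs : s = M - 1 ∨ s = 3 * M - 1)
    (hlo : a + c ≤ s) (hhi : s ≤ b + e) :
    ∃ p ∈ Set.Icc a b ×ˢ Set.Icc c e, p ∈ doubleStaircase M := by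
  obtain ⟨⟨x, y⟩, hp, hsum⟩ := exists_mem_Icc_prod_Icc_add_eq hab hce hlo hhi
  refine ⟨(x, y), hp, (mk_mem_doubleStaircase_iff ?_ ?_).2 (hsum ▸ hs)⟩
  · exact hp.1.2.trans_lt hb
  · exact hp.2.2.trans_lt he

lemma isMaximalGapBox_doubleStaircase {M a b c e : ℕ} (hac : a + c = M) (hbe : b + e = 3 * M - 2)
    (hab : a ≤ b) (hce : c ≤ e) (hb : b < 2 * M) (he : e < 2 * M) :
    IsMaximalGapBox (2 * M) (doubleStaircase M) (Set.Icc a b ×ˢ Set.Icc c e) := by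
  refine ⟨⟨⟨a, b, c, e, hab, hce, hb, he, rfl⟩, ?_⟩, ?_⟩
  · rintro ⟨x, y⟩ ⟨hx, hy⟩ hmem
    rw [mk_mem_doubleStaircase_iff (hx.2.trans_lt hb) (hy.2.trans_lt he)] at hmem
    simp only [Set.mem_Icc] at hx hy
    omega
  · rintro S' ⟨⟨a', b', c', e', hab', hce', hb', he', rfl⟩, hgap⟩ hsub
    obtain ⟨⟨ha', hb'b⟩, hc', he'e⟩ : (a' ≤ a ∧ b ≤ b') ∧ c' ≤ c ∧ e ≤ e' := by
      have hne : (Set.Icc a b ×ˢ Set.Icc c e).Nonempty :=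
        ⟨(a, c), Set.left_mem_Icc.2 hab, Set.left_mem_Icc.2 hce⟩
      rw [Set.prod_subset_prod_iff' hne,
        Set.Icc_subset_Icc_iff hab, Set.Icc_subset_Icc_iff hce] at hsub
      exact hsub
    have hmeets : ∀ s, s = M - 1 ∨ s = 3 * M - 1 → a' + c' ≤ s → s ≤ b' + e' → False := by
      intro s hs hlo hhi
      obtain ⟨p, hp, hpR⟩ :=
        exists_mem_Icc_prod_Icc_mem_doubleStaircase hab' hce' hb' he' hs hlo hhi
      exact hgap p hp hpR
    have hlower : M ≤ a' + c' := by
      by_contra h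
      exact hmeets (M - 1) (Or.inl rfl) (by omega) (by omega)
    have hupper : b' + e' ≤ 3 * M - 2 := by
      by_contra h
      exact hmeets (3 * M - 1) (Or.inr rfl) (by omega) (by omega)
    exact (Icc_prod_Icc_eq_Icc_prod_Icc_iff hab hce).2 (by omega)

/-- The box with corners `(a, M - a)` and `(b, 3M - 2 - b)` for `q = (a, k)`, where
`b = max a (M - 1) + k`: `max a (M - 1)` is the smallest admissible `b`. -/
def doubleStaircaseBox (M : ℕ) (q : ℕ × ℕ) : Set (ℕ × ℕ) :=
  Set.Icc q.1 (max q.1 (M - 1) + q.2) ×ˢ Set.Icc (M - q.1) (3 * M - 2 - (max q.1 (M - 1) + q.2))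

lemma le_ncard_maximalGapBoxes_doubleStaircase (M : ℕ) :
    M * (M + 1) ≤ {S | IsMaximalGapBox (2 * M) (doubleStaircase M) S}.ncard := by
  have hbox : ∀ q ∈ range (M + 1) ×ˢ range M,
      q.1 ≤ max q.1 (M - 1) + q.2 ∧ M - q.1 ≤ 3 * M - 2 - (max q.1 (M - 1) + q.2) := by
    intro q hq
    simp only [Finset.mem_product, Finset.mem_range] at hq
    omega
  calc M * (M + 1) = ((range (M + 1) ×ˢ range M : Finset (ℕ × ℕ)) : Set (ℕ × ℕ)).ncard := by
        rw [Set.ncard_coe_finset, card_product, card_range, card_range, mul_comm]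
    _ ≤ _ := by
      refine Set.ncard_le_ncard_of_injOn (doubleStaircaseBox M) ?_ ?_
        ((setOf_genBox_finite _).subset fun S hS ↦ hS.1.1)
      · intro q hq
        have hq' := Finset.mem_product.1 hq
        simp only [Finset.mem_range] at hq'
        exact isMaximalGapBox_doubleStaircase (by omega) (by omega) (hbox q hq).1 (hbox q hq).2
          (by omega) (by omega)
      · intro q hq q' _ h
        have := (Icc_prod_Icc_eq_Icc_prod_Icc_iff (hbox q hq).1 (hbox q hq).2).1 h
        ext <;> omega

theorem stmt7_general (N : ℕ) (hEven : Even N) :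
    ∃ R : Finset (ℕ × ℕ), (∀ p ∈ R, p.1 < N ∧ p.2 < N) ∧ R.card = N ∧
      (N / 2) * (N / 2 + 1) ≤
        {S : Set (ℕ × ℕ) | GenBox N S ∧ (∀ p ∈ S, p ∉ R) ∧
          ∀ S', GenBox N S' → (∀ p ∈ S', p ∉ R) → S ⊆ S' → S = S'}.ncard := by
  obtain ⟨M, rfl⟩ := hEven
  rw [← two_mul, Nat.mul_div_cancel_left M two_pos]
  refine ⟨doubleStaircase M, fun p ↦ doubleStaircase_subset_grid, card_doubleStaircase M, ?_⟩
  simpa only [IsMaximalGapBox, IsGapBox, and_assoc, and_imp] using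
    le_ncard_maximalGapBoxes_doubleStaircase M

/-- For every even `N ≥ 4` there is a relation `R ⊆ {0,…,N−1}^2` with exactly
`N` elements having at least `(N/2)·(N/2+1)` maximal general gap boxes. -/
theorem stmt7 (N : ℕ) (hN : 4 ≤ N) (hEven : Even N) :
    ∃ R : Finset (ℕ × ℕ), (∀ p ∈ R, p.1 < N ∧ p.2 < N) ∧ R.card = N ∧
      (N / 2) * (N / 2 + 1) ≤
        {S : Set (ℕ × ℕ) | GenBox N S ∧ (∀ p ∈ S, p ∉ R) ∧
          ∀ S', GenBox N S' → (∀ p ∈ S', p ∉ R) → S ⊆ S' → S = S'}.ncard :=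
  stmt7_general N hEven
end

section
/- Let Q be a join query over attributes with finite linearly ordered domains, let σ be a domain ordering, and let B be a box cover for σ(Q) consisting of K gap boxes for the relations of Q. Fix an attribute A. Define a ∼ a' for a, a' ∈ dom(A) if for every relation R containing A, the A-hyperplanes H(R,A,a) and H(R,A,a') are equal. Then the number of equivalence classes of ∼ on dom(A) is at most 2K + 1. -/
/-!
For every box fix its interval `[lo, hi]` along `A`. If `σ p ≤ σ a` and `p`, `a` are
inequivalent, some tuple lies in a relation `R` with `A`-value `p` and outside it with `A`-value
`a` (or vice versa); the gap box covering the outside tuple then contains exactly one of the two,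
so one of its face coordinates `lo` or `hi + 1` lies in `(σ p, σ a]`. Hence the class of `a` is
determined by how many of the at most `2K` face coordinates are `≤ σ a`, a number in `[0, 2K]`.
-/

/-- A join query over attribute set `𝒜` with attribute domains `D`: `m`
relations, the `i`-th over attribute set `attr i`.  A relation is represented
as a cylinder set of full tuples: membership only depends on the coordinates
in `attr i`. -/
structure Query (𝒜 : Type) (D : 𝒜 → Type) where
  m : ℕ
  attr : Fin m → Set 𝒜
  Rel : Fin m → Set (∀ a, D a)
  cyl : ∀ (i) (t t' : ∀ a, D a), (∀ a ∈ attr i, t a = t' a) → (t ∈ Rel i ↔ t' ∈ Rel i)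

variable {𝒜 : Type} {D : 𝒜 → Type}

/-- `B` is an axis-aligned box over the attributes in `S`, with respect to the
domain ordering `σ` (each `σ a` embeds `D a` into a linear order): a product of
intervals over the attributes in `S`, unconstrained (full domain) elsewhere. -/
def IsBoxWrt (σ : ∀ a, D a → ℕ) (S : Set 𝒜) (B : Set (∀ a, D a)) : Prop :=
  ∃ lo hi : 𝒜 → ℕ,
    B = {t | ∀ a ∈ S, lo a ≤ σ a (t a) ∧ σ a (t a) ≤ hi a}

/-- `𝓑` is a box cover of `Q` with respect to the domain ordering `σ`: the
boxes assigned to relation `i` are gap boxes of `Rel i` whose union is the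
complement of `Rel i`. -/
def IsCover (Q : Query 𝒜 D) (σ : ∀ a, D a → ℕ)
    (𝓑 : Fin Q.m → Set (Set (∀ a, D a))) : Prop :=
  ∀ i, (∀ b ∈ 𝓑 i, IsBoxWrt σ (Q.attr i) b ∧ b ∩ Q.Rel i = ∅) ∧
    ⋃₀ 𝓑 i = (Q.Rel i)ᶜ

/-- `a ∼ a'` on `dom A`: for every relation containing `A`, the
`A`-hyperplanes (slices) of `a` and `a'` coincide. -/
def HyperEq [DecidableEq 𝒜] (Q : Query 𝒜 D) (A : 𝒜) (a a' : D A) : Prop :=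
  ∀ i, A ∈ Q.attr i → ∀ t : ∀ x, D x,
    (Function.update t A a ∈ Q.Rel i ↔ Function.update t A a' ∈ Q.Rel i)

open Function Set

theorem Set.ncard_range_le_of_factorsThrough {α β γ : Type*} {E : α → β} {φ : α → γ}
    (h : FactorsThrough E φ) (hφ : (range φ).Finite) : (range E).ncard ≤ (range φ).ncard := by
  rcases isEmpty_or_nonempty α with hα | hα
  · simp [range_eq_empty]
  have hE : range E = (E ∘ invFun φ) '' range φ := by
    rw [← range_comp]
    congr 1
    funext a
    exact h (invFun_eq ⟨a, rfl⟩).symm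
  rw [hE]
  exact ncard_image_le hφ

-- `E a` is determined by the number of thresholds at or below `τ a`.
theorem ncard_range_le_ncard_add_one_of_thresholds {α β : Type*} (τ : α → ℕ) (E : α → β)
    {T : Set ℕ} (hT : T.Finite)
    (hsep : ∀ p a, τ p ≤ τ a → E p ≠ E a → ∃ c ∈ T, τ p < c ∧ c ≤ τ a) :
    (range E).ncard ≤ T.ncard + 1 := by
  set φ : α → ℕ := fun a => {c ∈ T | c ≤ τ a}.ncard
  have hφ_le : range φ ⊆ Iic T.ncard := by
    rintro _ ⟨a, rfl⟩
    exact ncard_le_ncard (sep_subset _ _) hT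
  have hfactor : FactorsThrough E φ := by
    suffices key : ∀ p a, τ p ≤ τ a → φ p = φ a → E p = E a by
      intro p a hpa
      rcases le_total (τ p) (τ a) with h | h
      · exact key p a h hpa
      · exact (key a p h hpa.symm).symm
    intro p a hle hpa
    by_contra hne
    obtain ⟨c, hcT, hpc, hca⟩ := hsep p a hle hne
    have hsub : {c ∈ T | c ≤ τ p} ⊆ {c ∈ T | c ≤ τ a} := fun c hc => ⟨hc.1, hc.2.trans hle⟩
    have heq := eq_of_subset_of_ncard_le hsub hpa.ge (hT.subset (sep_subset _ _))
    have hc : c ∈ {c ∈ T | c ≤ τ p} := heq ▸ ⟨hcT, hca⟩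
    exact absurd hc.2 (not_le.mpr hpc)
  calc (range E).ncard ≤ (range φ).ncard :=
        ncard_range_le_of_factorsThrough hfactor ((finite_Iic _).subset hφ_le)
    _ ≤ T.ncard + 1 := (ncard_le_ncard hφ_le (finite_Iic _)).trans_eq (ncard_Iic_nat _)

def intervalBox (σ : ∀ a, D a → ℕ) (S : Set 𝒜) (lo hi : 𝒜 → ℕ) : Set (∀ a, D a) :=
  {t | ∀ a ∈ S, lo a ≤ σ a (t a) ∧ σ a (t a) ≤ hi a}

theorem update_mem_intervalBox_iff [DecidableEq 𝒜] {σ : ∀ a, D a → ℕ} {S : Set 𝒜}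
    {lo hi : 𝒜 → ℕ} {A : 𝒜} (hA : A ∈ S) {t : ∀ a, D a} {x : D A}
    (hx : update t A x ∈ intervalBox σ S lo hi) (y : D A) :
    update t A y ∈ intervalBox σ S lo hi ↔ σ A y ∈ Icc (lo A) (hi A) := by
  refine ⟨fun hy => by simpa using hy A hA, fun hy a ha => ?_⟩
  rcases eq_or_ne a A with rfl | hne
  · simpa using hy
  · simpa [update_of_ne hne] using hx a ha

/-- A box whose `A`-interval is `[lo, hi]` separates `p` from `a`, where `σ p ≤ σ a`, exactly
when `σ p < c ≤ σ a` for `c = lo` or `c = hi + 1`. -/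
def faceThresholds {ι β : Type*} (𝓑 : ι → Set β) (lo hi : ι → β → 𝒜 → ℕ) (A : 𝒜) : Set ℕ :=
  ⋃ i, (fun b => lo i b A) '' 𝓑 i ∪ (fun b => hi i b A + 1) '' 𝓑 i

section faceThresholds

variable {ι β : Type*} {𝓑 : ι → Set β} (hfin : ∀ i, (𝓑 i).Finite)
  (lo hi : ι → β → 𝒜 → ℕ) (A : 𝒜)
include hfin

theorem finite_faceThresholds [Finite ι] : (faceThresholds 𝓑 lo hi A).Finite :=
  finite_iUnion fun i => ((hfin i).image _).union ((hfin i).image _)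

theorem ncard_faceThresholds_le [Fintype ι] :
    (faceThresholds 𝓑 lo hi A).ncard ≤ 2 * ∑ i, (𝓑 i).ncard := by
  rw [Finset.mul_sum]
  refine (ncard_iUnion_le_of_fintype _).trans (Finset.sum_le_sum fun i _ => ?_)
  have hlo := ncard_image_le (f := fun b => lo i b A) (hfin i)
  have hhi := ncard_image_le (f := fun b => hi i b A + 1) (hfin i)
  have := ncard_union_le ((fun b => lo i b A) '' 𝓑 i) ((fun b => hi i b A + 1) '' 𝓑 i)
  omega

end faceThresholds

theorem HyperEq.setOf_eq [DecidableEq 𝒜] {Q : Query 𝒜 D} {A : 𝒜} {p a : D A}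
    (h : HyperEq Q A p a) : {a' | HyperEq Q A p a'} = {a' | HyperEq Q A a a'} := by
  ext a'
  exact ⟨fun hp i hi t => (h i hi t).symm.trans (hp i hi t),
    fun ha i hi t => (h i hi t).trans (ha i hi t)⟩

namespace IsCover

variable {Q : Query 𝒜 D} {σ : ∀ a, D a → ℕ} {𝓑 : Fin Q.m → Set (Set (∀ a, D a))}

theorem exists_bounds (hcov : IsCover Q σ 𝓑) :
    ∃ lo hi : Fin Q.m → Set (∀ a, D a) → 𝒜 → ℕ,
      ∀ i, ∀ b ∈ 𝓑 i, b = intervalBox σ (Q.attr i) (lo i b) (hi i b) := by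
  classical
  have h : ∀ i b, ∃ lo hi : 𝒜 → ℕ, b ∈ 𝓑 i → b = intervalBox σ (Q.attr i) lo hi := by
    intro i b
    by_cases hb : b ∈ 𝓑 i
    · obtain ⟨lo, hi, hb'⟩ := ((hcov i).1 b hb).1
      exact ⟨lo, hi, fun _ => hb'⟩
    · exact ⟨0, 0, fun h => absurd h hb⟩
  choose lo hi hspec using h
  exact ⟨lo, hi, hspec⟩

variable [DecidableEq 𝒜] (hcov : IsCover Q σ 𝓑) {lo hi : Fin Q.m → Set (∀ a, D a) → 𝒜 → ℕ}
  (hbox : ∀ i, ∀ b ∈ 𝓑 i, b = intervalBox σ (Q.attr i) (lo i b) (hi i b))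
include hcov hbox

-- The gap box covering the `x`-slice would otherwise also contain the `y`-slice.
theorem exists_separating_box {i : Fin Q.m} {A : 𝒜} (hA : A ∈ Q.attr i) {t : ∀ a, D a}
    {x y : D A} (hx : update t A x ∉ Q.Rel i) (hy : update t A y ∈ Q.Rel i) :
    ∃ b ∈ 𝓑 i, σ A x ∈ Icc (lo i b A) (hi i b A) ∧ σ A y ∉ Icc (lo i b A) (hi i b A) := by
  rw [← mem_compl_iff, ← (hcov i).2] at hx
  obtain ⟨b, hb, hxb⟩ := hx
  rw [hbox i b hb] at hxb
  refine ⟨b, hb, (update_mem_intervalBox_iff hA hxb x).1 hxb, fun hyI => ?_⟩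
  have hyb : update t A y ∈ b := hbox i b hb ▸ (update_mem_intervalBox_iff hA hxb y).2 hyI
  exact eq_empty_iff_forall_notMem.1 ((hcov i).1 b hb).2 _ ⟨hyb, hy⟩

theorem exists_mem_faceThresholds_of_not_hyperEq {A : 𝒜} {p a : D A} (hpa : σ A p ≤ σ A a)
    (hne : ¬ HyperEq Q A p a) : ∃ c ∈ faceThresholds 𝓑 lo hi A, σ A p < c ∧ c ≤ σ A a := by
  simp only [HyperEq, not_forall] at hne
  obtain ⟨i, hA, t, hiff⟩ := hne
  by_cases hp : update t A p ∈ Q.Rel i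
  · have ha : update t A a ∉ Q.Rel i := fun ha => hiff (iff_of_true hp ha)
    obtain ⟨b, hb, haI, hpI⟩ := exists_separating_box hcov hbox hA ha hp
    simp only [mem_Icc, not_and_or, not_le] at haI hpI
    exact ⟨lo i b A, mem_iUnion.2 ⟨i, Or.inl (mem_image_of_mem _ hb)⟩, by omega, haI.1⟩
  · have ha : update t A a ∈ Q.Rel i := by_contra fun ha => hiff (iff_of_false hp ha)
    obtain ⟨b, hb, hpI, haI⟩ := exists_separating_box hcov hbox hA hp ha
    simp only [mem_Icc, not_and_or, not_le] at haI hpI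
    exact ⟨hi i b A + 1, mem_iUnion.2 ⟨i, Or.inr (mem_image_of_mem _ hb)⟩, by omega, by omega⟩

end IsCover

theorem stmt8_general [DecidableEq 𝒜] (Q : Query 𝒜 D)
    (σ : ∀ a, D a → ℕ)
    (𝓑 : Fin Q.m → Set (Set (∀ a, D a))) (hcov : IsCover Q σ 𝓑)
    (hfin : ∀ i, (𝓑 i).Finite) (K : ℕ) (hK : ∑ i, (𝓑 i).ncard = K) (A : 𝒜) :
    (Set.range fun a : D A => {a' | HyperEq Q A a a'}).ncard ≤ 2 * K + 1 := by
  obtain ⟨lo, hi, hbox⟩ := hcov.exists_bounds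
  calc _ ≤ (faceThresholds 𝓑 lo hi A).ncard + 1 :=
        ncard_range_le_ncard_add_one_of_thresholds (σ A) _ (finite_faceThresholds hfin lo hi A)
          fun p a hpa hne => hcov.exists_mem_faceThresholds_of_not_hyperEq hbox hpa
            fun h => hne h.setOf_eq
    _ ≤ 2 * K + 1 := by
        have := ncard_faceThresholds_le hfin lo hi A
        omega

/-- The number of equivalence classes of `∼` on `dom A` is at most `2K + 1`,
where `K` is the total size of a box cover `𝓑` for `Q` under the ordering `σ`. -/
theorem stmt8 [DecidableEq 𝒜] [∀ a, Fintype (D a)] (Q : Query 𝒜 D)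
    (σ : ∀ a, D a → ℕ) (hσ : ∀ a, Function.Injective (σ a))
    (𝓑 : Fin Q.m → Set (Set (∀ a, D a))) (hcov : IsCover Q σ 𝓑)
    (hfin : ∀ i, (𝓑 i).Finite) (K : ℕ) (hK : ∑ i, (𝓑 i).ncard = K) (A : 𝒜) :
    (Set.range fun a : D A => {a' | HyperEq Q A a a'}).ncard ≤ 2 * K + 1 :=
  stmt8_general Q σ 𝓑 hcov hfin K hK A
end

section
/- Let R be a finite subset of D_1 × ⋯ × D_n, where each D_i is linearly ordered and partitioned into at most h_i consecutive runs of values with identical slices (hyperplanes) in R. Then the complement of R in D_1 × ⋯ × D_n can be written as a union of at most h_1 · h_2 ⋯ h_n axis-aligned boxes (products of intervals) each disjoint from R. -/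
/-!
A point of a box cut out by one run in each coordinate can be moved to any other point of
the same box one coordinate at a time, and each move stays inside or outside `R` because
the two values have the same slice. So each of the at most `h 1 ⋯ h n` such boxes lies
entirely inside `R` or entirely inside its complement, and the boxes of the second kind
cover `Rᶜ`.
-/

open Set

/-- Values `a, a'` of the `i`-th domain have identical slices (hyperplanes) in
`R`. -/
def sameSlice {n : ℕ} {D : Fin n → Type} (R : Set (∀ i, D i)) (i : Fin n)
    (a a' : D i) : Prop :=
  ∀ t : ∀ j, D j, Function.update t i a ∈ R ↔ Function.update t i a' ∈ R

theorem Set.ncard_univ_pi {ι : Type*} [Fintype ι] {α : ι → Type*} (s : ∀ i, Set (α i)) :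
    (univ.pi s).ncard = ∏ i, (s i).ncard := by
  rw [← Nat.card_coe_set_eq, Nat.card_congr (Equiv.Set.univPi s), Nat.card_pi]
  simp only [Nat.card_coe_set_eq]

section Slices

variable {n : ℕ} {D : Fin n → Type} {R : Set (∀ i, D i)}

theorem mem_iff_mem_of_forall_sameSlice {t t' : ∀ i, D i}
    (hss : ∀ i, sameSlice R i (t i) (t' i)) : t ∈ R ↔ t' ∈ R := by
  classical
  suffices key : ∀ s : Finset (Fin n), s.piecewise t' t ∈ R ↔ t ∈ R by
    simpa using (key Finset.univ).symm
  intro s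
  induction s using Finset.induction_on with
  | empty => simp
  | insert i s hi ih =>
    have hgi : s.piecewise t' t i = t i := Finset.piecewise_eq_of_notMem _ _ _ hi
    rw [Finset.piecewise_insert, ← ih, ← hss i, ← hgi, Function.update_eq_self]

theorem univ_pi_inter_eq_empty_of_forall_sameSlice {I : ∀ i, Set (D i)}
    (hI : ∀ i, ∀ a ∈ I i, ∀ a' ∈ I i, sameSlice R i a a') {t : ∀ i, D i}
    (ht : t ∈ univ.pi I) (htR : t ∉ R) : univ.pi I ∩ R = ∅ := by
  refine eq_empty_of_forall_notMem fun t' ⟨ht', ht'R⟩ => htR ?_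
  rw [mem_univ_pi] at ht ht'
  exact (mem_iff_mem_of_forall_sameSlice fun i => hI i _ (ht' i) _ (ht i)).mp ht'R

end Slices

theorem stmt10_general {n : ℕ} {D : Fin n → Type} [∀ i, LinearOrder (D i)]
    (R : Set (∀ i, D i)) (h : Fin n → ℕ)
    (P : ∀ i, Set (Set (D i)))
    (hPfin : ∀ i, (P i).Finite) (hPcard : ∀ i, (P i).ncard ≤ h i)
    (hconn : ∀ i, ∀ S ∈ P i, S.OrdConnected)
    (hslice : ∀ i, ∀ S ∈ P i, ∀ a ∈ S, ∀ a' ∈ S, sameSlice R i a a')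
    (hcover : ∀ i, ⋃₀ P i = Set.univ) :
    ∃ F : Set (Set (∀ i, D i)), F.Finite ∧ F.ncard ≤ ∏ i, h i ∧
      (∀ b ∈ F,
        (∃ I : ∀ i, Set (D i), (∀ i, (I i).OrdConnected) ∧
          b = {t | ∀ i, t i ∈ I i}) ∧ b ∩ R = ∅) ∧
      ⋃₀ F = Rᶜ := by
  set grid := univ.pi P
  have hgrid : grid.Finite := Finite.pi hPfin
  refine ⟨{b ∈ pi univ '' grid | b ∩ R = ∅}, (hgrid.image _).subset (sep_subset _ _), ?_, ?_, ?_⟩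
  · calc {b ∈ pi univ '' grid | b ∩ R = ∅}.ncard
        ≤ (pi univ '' grid).ncard := ncard_le_ncard (sep_subset _ _) (hgrid.image _)
      _ ≤ grid.ncard := ncard_image_le hgrid
      _ ≤ ∏ i, h i := (ncard_univ_pi P).trans_le (Finset.prod_le_prod' fun i _ => hPcard i)
  · rintro b ⟨⟨I, hI, rfl⟩, hbR⟩
    exact ⟨⟨I, fun i => hconn i _ (hI i trivial), by ext; simp⟩, hbR⟩
  · refine Subset.antisymm (fun t ⟨b, ⟨_, hbR⟩, htb⟩ htR => hbR.subset ⟨htb, htR⟩) fun t htR => ?_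
    have hrun : ∀ i, ∃ S ∈ P i, t i ∈ S := fun i => by
      simpa only [← mem_sUnion] using (hcover i).symm ▸ mem_univ (t i)
    choose I hIP htI using hrun
    refine ⟨univ.pi I, ⟨mem_image_of_mem _ fun i _ => hIP i, ?_⟩, fun i _ => htI i⟩
    exact univ_pi_inter_eq_empty_of_forall_sameSlice (fun i => hslice i _ (hIP i))
      (fun i _ => htI i) htR

/-- If each domain `D i` is partitioned into at most `h i` consecutive runs
(order-connected sets) of values with identical slices in `R`, then the
complement of `R` is a union of at most `h 1 · ⋯ · h n` axis-aligned boxes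
(products of order-connected intervals), each disjoint from `R`. -/
theorem stmt10 {n : ℕ} {D : Fin n → Type} [∀ i, LinearOrder (D i)]
    (R : Set (∀ i, D i)) (hRfin : R.Finite) (h : Fin n → ℕ)
    (P : ∀ i, Set (Set (D i)))
    (hPfin : ∀ i, (P i).Finite) (hPcard : ∀ i, (P i).ncard ≤ h i)
    (hconn : ∀ i, ∀ S ∈ P i, S.OrdConnected)
    (hslice : ∀ i, ∀ S ∈ P i, ∀ a ∈ S, ∀ a' ∈ S, sameSlice R i a a')
    (hcover : ∀ i, ⋃₀ P i = Set.univ)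
    (hdisj : ∀ i, ∀ S ∈ P i, ∀ S' ∈ P i, S ≠ S' → S ∩ S' = ∅) :
    ∃ F : Set (Set (∀ i, D i)), F.Finite ∧ F.ncard ≤ ∏ i, h i ∧
      (∀ b ∈ F,
        (∃ I : ∀ i, Set (D i), (∀ i, (I i).OrdConnected) ∧
          b = {t | ∀ i, t i ∈ I i}) ∧ b ∩ R = ∅) ∧
      ⋃₀ F = Rᶜ :=
  stmt10_general R h P hPfin hPcard hconn hslice hcover
end

section
/- Combining the previous two facts: if Q is a query over relations of maximum arity r and there exists a domain ordering σ* under which Q has a box cover of size K, then under any domain ordering σ that, for each attribute A, places each equivalence class of ∼_A (equality of all A-hyperplanes across all relations containing A) in a single consecutive run, each relation R of arity n_R has a box cover of size at most (2K+1)^{n_R}, and hence Q has a box cover of total size at most m(2K+1)^r, where m is the number of relations. -/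
variable {𝒜 : Type} {D : 𝒜 → Type}

/-!
Under `σ'`, the `≤ 2K` endpoints of the `A`-sides of the `K` boxes cut the `A`-axis into at most
`2K + 1` pieces; values in one piece lie in the same boxes, hence have the same `A`-hyperplanes,
so each `∼_A` has at most `2K + 1` classes. Under `σ` every class is a run, so for a tuple `t ∉ R`
the product of the classes of its coordinates is a gap box, and these grid cells cover `Rᶜ` with
at most `(2K + 1)^{n_R}` boxes.
-/

theorem Set.update_mem_pi_iff_update_mem_pi {ι : Type*} {α : ι → Type*} [DecidableEq ι]
    {s : Set ι} {t : ∀ i, Set (α i)} {a : ∀ i, α i} {i : ι} {b b' : α i}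
    (h : i ∈ s → (b ∈ t i ↔ b' ∈ t i)) :
    Function.update a i b ∈ s.pi t ↔ Function.update a i b' ∈ s.pi t := by
  simp only [Set.update_mem_pi_iff]
  exact and_congr_right' (imp_congr_right h)

section IntervalRank

variable {ι : Type*} [Fintype ι] (lo hi : ι → ℕ)

open Finset

-- The number of interval boundaries passed on the way up to `x` (entering at `lo p`, leaving
-- after `hi p`); two points with the same count lie in exactly the same intervals.
def intervalRank (x : ℕ) : ℕ := #{p | lo p ≤ x} + #{p | hi p < x}

theorem intervalRank_le (x : ℕ) : intervalRank lo hi x ≤ 2 * Fintype.card ι := by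
  have hlo := card_filter_le univ fun p => lo p ≤ x
  have hhi := card_filter_le univ fun p => hi p < x
  rw [card_univ] at hlo hhi
  unfold intervalRank
  omega

theorem mem_Icc_iff_of_intervalRank_eq_of_le {x y : ℕ} (hxy : x ≤ y)
    (h : intervalRank lo hi x = intervalRank lo hi y) (p : ι) :
    x ∈ Set.Icc (lo p) (hi p) ↔ y ∈ Set.Icc (lo p) (hi p) := by
  have hsub_lo : univ.filter (fun p => lo p ≤ x) ⊆ univ.filter (fun p => lo p ≤ y) :=
    monotone_filter_right _ fun _ _ hp => hp.trans hxy
  have hsub_hi : univ.filter (fun p => hi p < x) ⊆ univ.filter (fun p => hi p < y) :=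
    monotone_filter_right _ fun _ _ hp => hp.trans_le hxy
  have hcard_lo := card_le_card hsub_lo
  have hcard_hi := card_le_card hsub_hi
  unfold intervalRank at h
  have heq_lo := eq_of_subset_of_card_le hsub_lo (by omega)
  have heq_hi := eq_of_subset_of_card_le hsub_hi (by omega)
  have hp_lo : lo p ≤ x ↔ lo p ≤ y := by simpa using congrArg (p ∈ ·) heq_lo
  have hp_hi : hi p < x ↔ hi p < y := by simpa using congrArg (p ∈ ·) heq_hi
  simp only [Set.mem_Icc]
  omega

theorem mem_Icc_iff_of_intervalRank_eq {x y : ℕ}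
    (h : intervalRank lo hi x = intervalRank lo hi y) (p : ι) :
    x ∈ Set.Icc (lo p) (hi p) ↔ y ∈ Set.Icc (lo p) (hi p) := by
  rcases le_total x y with hxy | hyx
  · exact mem_Icc_iff_of_intervalRank_eq_of_le lo hi hxy h p
  · exact (mem_Icc_iff_of_intervalRank_eq_of_le lo hi hyx h.symm p).symm

end IntervalRank

theorem IsCover.mem_rel_iff {Q : Query 𝒜 D} {σ : ∀ a, D a → ℕ}
    {𝓑 : Fin Q.m → Set (Set (∀ a, D a))} (h : IsCover Q σ 𝓑) (i : Fin Q.m) (t : ∀ a, D a) :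
    t ∈ Q.Rel i ↔ ∀ b ∈ 𝓑 i, t ∉ b := by
  rw [← not_iff_not, ← Set.mem_compl_iff, ← (h i).2]
  simp

section HyperEq

variable [DecidableEq 𝒜] {Q : Query 𝒜 D} {A : 𝒜}

theorem HyperEq.refl (Q : Query 𝒜 D) (A : 𝒜) (a : D A) : HyperEq Q A a a :=
  fun _ _ _ => Iff.rfl

theorem HyperEq.symm {a a' : D A} (h : HyperEq Q A a a') : HyperEq Q A a' a :=
  fun i hi t => (h i hi t).symm

theorem HyperEq.trans {a a' a'' : D A} (h : HyperEq Q A a a') (h' : HyperEq Q A a' a'') :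
    HyperEq Q A a a'' :=
  fun i hi t => (h i hi t).trans (h' i hi t)

theorem mem_rel_iff_update_mem_rel {i : Fin Q.m} {t : ∀ a, D a} {b : D A}
    (h : A ∈ Q.attr i → HyperEq Q A (t A) b) :
    t ∈ Q.Rel i ↔ Function.update t A b ∈ Q.Rel i := by
  by_cases hA : A ∈ Q.attr i
  · simpa using h hA i hA t
  · exact Q.cyl i _ _ fun x hx => (Function.update_of_ne (ne_of_mem_of_not_mem hx hA) _ _).symm

theorem mem_rel_iff_of_hyperEq {i : Fin Q.m} (hfin : (Q.attr i).Finite) {t t' : ∀ a, D a}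
    (h : ∀ A ∈ Q.attr i, HyperEq Q A (t A) (t' A)) : t ∈ Q.Rel i ↔ t' ∈ Q.Rel i := by
  suffices key : ∀ (S : Finset 𝒜) (t : ∀ a, D a), (∀ A ∈ Q.attr i, HyperEq Q A (t A) (t' A)) →
      (∀ A ∈ Q.attr i, A ∉ S → t A = t' A) → (t ∈ Q.Rel i ↔ t' ∈ Q.Rel i) from
    key hfin.toFinset t h fun A hA hAS => absurd (hfin.mem_toFinset.mpr hA) hAS
  intro S
  induction S using Finset.induction_on with
  | empty => exact fun t _ hoff => Q.cyl i t t' fun A hA => hoff A hA (Finset.notMem_empty A)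
  | @insert A S hAS ih =>
    intro t hsim hoff
    rw [mem_rel_iff_update_mem_rel (hsim A)]
    refine ih _ (fun B hB => ?_) (fun B hB hBS => ?_)
    · by_cases hBA : B = A
      · subst hBA; simpa using HyperEq.refl Q B (t' B)
      · simpa [Function.update_of_ne hBA] using hsim B hB
    · by_cases hBA : B = A
      · subst hBA; simp
      · simpa [Function.update_of_ne hBA] using hoff B hB (by simp [hBA, hBS])

theorem IsCover.hyperEq_of_update_mem_iff {σ : ∀ a, D a → ℕ}
    {𝓑 : Fin Q.m → Set (Set (∀ a, D a))} (h : IsCover Q σ 𝓑) {a a' : D A}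
    (hab : ∀ i, A ∈ Q.attr i → ∀ b ∈ 𝓑 i, ∀ t : ∀ x, D x,
      Function.update t A a ∈ b ↔ Function.update t A a' ∈ b) :
    HyperEq Q A a a' := fun i hA t => by
  rw [h.mem_rel_iff, h.mem_rel_iff]
  exact forall₂_congr fun b hb => not_congr (hab i hA b hb t)

end HyperEq

section Cover

variable [DecidableEq 𝒜] {Q : Query 𝒜 D}

theorem IsCover.exists_coloring {σ : ∀ a, D a → ℕ} {𝓑 : Fin Q.m → Set (Set (∀ a, D a))}
    (h : IsCover Q σ 𝓑) (hfin : ∀ i, (𝓑 i).Finite) :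
    ∃ f : ∀ A, D A → Fin (2 * ∑ i, (𝓑 i).ncard + 1),
      ∀ A a a', f A a = f A a' → HyperEq Q A a a' := by
  have := fun i => (hfin i).to_subtype
  let _ : Fintype (Σ i, 𝓑 i) := Fintype.ofFinite _
  have hcard : Fintype.card (Σ i, 𝓑 i) = ∑ i, (𝓑 i).ncard := by
    simp only [Fintype.card_eq_nat_card, Nat.card_sigma, Nat.card_coe_set_eq]
  choose lo hi hbox using fun p : Σ i, 𝓑 i => ((h p.1).1 p.2 p.2.2).1
  refine ⟨fun A a => ⟨intervalRank (fun p => lo p A) (fun p => hi p A) (σ A a), ?_⟩,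
    fun A a a' hf => ?_⟩
  · have := intervalRank_le (fun p => lo p A) (fun p => hi p A) (σ A a)
    omega
  refine h.hyperEq_of_update_mem_iff fun i _ b hb t => ?_
  rw [show b = _ from hbox ⟨i, b, hb⟩]
  exact Set.update_mem_pi_iff_update_mem_pi
    (t := fun x => σ x ⁻¹' Set.Icc (lo ⟨i, b, hb⟩ x) (hi ⟨i, b, hb⟩ x)) fun _ =>
    mem_Icc_iff_of_intervalRank_eq _ _ (congrArg Fin.val hf) _

theorem exists_Icc_iff_hyperEq [Fintype (D A)] {σ : D A → ℕ}
    (hruns : ∀ a a' a'' : D A, σ a ≤ σ a' → σ a' ≤ σ a'' → HyperEq Q A a a'' → HyperEq Q A a a')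
    (a : D A) : ∃ lo hi : ℕ, ∀ a', σ a' ∈ Set.Icc lo hi ↔ HyperEq Q A a a' := by
  classical
  let cls : Finset (D A) := {a' | HyperEq Q A a a'}
  have hne : cls.Nonempty := ⟨a, by simpa [cls] using HyperEq.refl Q A a⟩
  obtain ⟨amin, hamin, hmin⟩ := cls.exists_min_image σ hne
  obtain ⟨amax, hamax, hmax⟩ := cls.exists_max_image σ hne
  simp only [cls, Finset.mem_filter, Finset.mem_univ, true_and] at hamin hamax hmin hmax
  refine ⟨σ amin, σ amax, fun a' => ⟨fun ⟨hlo, hhi⟩ => ?_, fun ha' => ⟨hmin a' ha', hmax a' ha'⟩⟩⟩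
  exact hamin.trans (hruns amin a' amax hlo hhi (hamin.symm.trans hamax))

end Cover

section Grid

variable [DecidableEq 𝒜] (Q : Query 𝒜 D)

def gridCell (i : Fin Q.m) (t : ∀ a, D a) : Set (∀ a, D a) :=
  (Q.attr i).pi fun A => {a | HyperEq Q A (t A) a}

def gridCover (i : Fin Q.m) : Set (Set (∀ a, D a)) :=
  gridCell Q i '' (Q.Rel i)ᶜ

variable {Q} {i : Fin Q.m}

theorem self_mem_gridCell (t : ∀ a, D a) : t ∈ gridCell Q i t :=
  fun A _ => HyperEq.refl Q A (t A)

theorem gridCell_eq_of_hyperEq {t t' : ∀ a, D a} (h : ∀ A ∈ Q.attr i, HyperEq Q A (t A) (t' A)) :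
    gridCell Q i t = gridCell Q i t' :=
  Set.pi_congr rfl fun A hA => Set.ext fun _ => ⟨(h A hA).symm.trans, (h A hA).trans⟩

theorem gridCell_inter_rel_eq_empty (hfin : (Q.attr i).Finite) {t : ∀ a, D a}
    (ht : t ∉ Q.Rel i) : gridCell Q i t ∩ Q.Rel i = ∅ :=
  Set.eq_empty_iff_forall_notMem.2 fun _ ⟨ht', hrel⟩ =>
    ht ((mem_rel_iff_of_hyperEq hfin ht').2 hrel)

theorem isBoxWrt_gridCell [∀ a, Fintype (D a)] {σ : ∀ a, D a → ℕ}
    (hruns : ∀ (A : 𝒜) (a a' a'' : D A), σ A a ≤ σ A a' → σ A a' ≤ σ A a'' →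
      HyperEq Q A a a'' → HyperEq Q A a a')
    (t : ∀ a, D a) : IsBoxWrt σ (Q.attr i) (gridCell Q i t) := by
  choose lo hi h using fun A => exists_Icc_iff_hyperEq (hruns A) (t A)
  exact ⟨lo, hi, Set.ext fun t' => forall₂_congr fun A _ => (h A (t' A)).symm⟩

theorem isCover_gridCover [∀ a, Fintype (D a)] {σ : ∀ a, D a → ℕ}
    (hfin : ∀ i, (Q.attr i).Finite)
    (hruns : ∀ (A : 𝒜) (a a' a'' : D A), σ A a ≤ σ A a' → σ A a' ≤ σ A a'' →
      HyperEq Q A a a'' → HyperEq Q A a a') :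
    IsCover Q σ (gridCover Q) := by
  refine fun i => ⟨?_, Set.ext fun t => ⟨?_, fun ht => ⟨_, ⟨t, ht, rfl⟩, self_mem_gridCell t⟩⟩⟩
  · rintro _ ⟨t, ht, rfl⟩
    exact ⟨isBoxWrt_gridCell hruns t, gridCell_inter_rel_eq_empty (hfin i) ht⟩
  · rintro ⟨_, ⟨s, hs, rfl⟩, hts⟩ hrel
    exact (gridCell_inter_rel_eq_empty (hfin i) hs).subset ⟨hts, hrel⟩

theorem exists_injective_gridCover {N : ℕ} {f : ∀ A, D A → Fin N}
    (hf : ∀ A a a', f A a = f A a' → HyperEq Q A a a') :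
    ∃ φ : gridCover Q i → (Q.attr i → Fin N), Function.Injective φ := by
  choose t ht using fun B : gridCover Q i => B.2
  refine ⟨fun B A => f A (t B A), fun B C hBC => Subtype.ext ?_⟩
  rw [← (ht B).2, ← (ht C).2]
  exact gridCell_eq_of_hyperEq fun A hA => hf A _ _ (congrFun hBC ⟨A, hA⟩)

theorem finite_gridCover (hfin : (Q.attr i).Finite) {N : ℕ} {f : ∀ A, D A → Fin N}
    (hf : ∀ A a a', f A a = f A a' → HyperEq Q A a a') : (gridCover Q i).Finite := by
  obtain ⟨φ, hφ⟩ := exists_injective_gridCover (i := i) hf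
  have := hfin.to_subtype
  exact Set.finite_coe_iff.mp (Finite.of_injective φ hφ)

theorem ncard_gridCover_le (hfin : (Q.attr i).Finite) {N : ℕ} {f : ∀ A, D A → Fin N}
    (hf : ∀ A a a', f A a = f A a' → HyperEq Q A a a') :
    (gridCover Q i).ncard ≤ N ^ (Q.attr i).ncard := by
  obtain ⟨φ, hφ⟩ := exists_injective_gridCover (i := i) hf
  have := hfin.to_subtype
  calc (gridCover Q i).ncard = Nat.card (gridCover Q i) := (Nat.card_coe_set_eq _).symm
    _ ≤ Nat.card (Q.attr i → Fin N) := Nat.card_le_card_of_injective φ hφ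
    _ = N ^ (Q.attr i).ncard := by rw [Nat.card_fun, Nat.card_coe_set_eq, Nat.card_fin]

end Grid

theorem stmt11_general [DecidableEq 𝒜] [∀ a, Fintype (D a)] (Q : Query 𝒜 D)
    (K r : ℕ) (hr : ∀ i, (Q.attr i).Finite ∧ (Q.attr i).ncard ≤ r)
    (hex : ∃ σ' : ∀ a, D a → ℕ, (∀ a, Function.Injective (σ' a)) ∧
      ∃ 𝓑', IsCover Q σ' 𝓑' ∧ (∀ i, (𝓑' i).Finite) ∧ ∑ i, (𝓑' i).ncard = K)
    (σ : ∀ a, D a → ℕ)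
    (hruns : ∀ (A : 𝒜) (a a' a'' : D A), σ A a ≤ σ A a' → σ A a' ≤ σ A a'' →
      HyperEq Q A a a'' → HyperEq Q A a a') :
    ∃ 𝓑, IsCover Q σ 𝓑 ∧ (∀ i, (𝓑 i).Finite) ∧
      (∀ i, (𝓑 i).ncard ≤ (2 * K + 1) ^ (Q.attr i).ncard) ∧
      ∑ i, (𝓑 i).ncard ≤ Q.m * (2 * K + 1) ^ r := by
  obtain ⟨σ', -, 𝓑', hcov', hfin', rfl⟩ := hex
  obtain ⟨f, hf⟩ := hcov'.exists_coloring hfin'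
  have hcard i := ncard_gridCover_le (hr i).1 hf
  refine ⟨gridCover Q, isCover_gridCover (fun i => (hr i).1) hruns,
    fun i => finite_gridCover (hr i).1 hf, hcard, ?_⟩
  calc ∑ i, (gridCover Q i).ncard ≤ ∑ _i : Fin Q.m, (2 * ∑ i, (𝓑' i).ncard + 1) ^ r :=
        Finset.sum_le_sum fun i _ => (hcard i).trans (Nat.pow_le_pow_right (by omega) (hr i).2)
    _ = Q.m * (2 * ∑ i, (𝓑' i).ncard + 1) ^ r := by simp

/-- If there is some domain ordering under which `Q` has a box cover of total
size `K`, then under any domain ordering `σ` that places each `∼`-equivalence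
class of each attribute domain in a single consecutive run, every relation of
arity `n_i` has a box cover of size at most `(2K+1)^{n_i}`; hence `Q` has a box
cover of total size at most `m·(2K+1)^r`, where `r` bounds the arities. -/
theorem stmt11 [DecidableEq 𝒜] [∀ a, Fintype (D a)] (Q : Query 𝒜 D)
    (K r : ℕ) (hr : ∀ i, (Q.attr i).Finite ∧ (Q.attr i).ncard ≤ r)
    (hex : ∃ σ' : ∀ a, D a → ℕ, (∀ a, Function.Injective (σ' a)) ∧
      ∃ 𝓑', IsCover Q σ' 𝓑' ∧ (∀ i, (𝓑' i).Finite) ∧ ∑ i, (𝓑' i).ncard = K)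
    (σ : ∀ a, D a → ℕ) (hσ : ∀ a, Function.Injective (σ a))
    (hruns : ∀ (A : 𝒜) (a a' a'' : D A), σ A a ≤ σ A a' → σ A a' ≤ σ A a'' →
      HyperEq Q A a a'' → HyperEq Q A a a') :
    ∃ 𝓑, IsCover Q σ 𝓑 ∧ (∀ i, (𝓑 i).Finite) ∧
      (∀ i, (𝓑 i).ncard ≤ (2 * K + 1) ^ (Q.attr i).ncard) ∧
      ∑ i, (𝓑 i).ncard ≤ Q.m * (2 * K + 1) ^ r :=
  stmt11_general Q K r hr hex σ hruns
end

section
/- Let R ⊆ {0,…,2^d−1}^n be a finite relation and let B be a maximal dyadic box cover index of R (a set of dyadic gap boxes containing every maximal dyadic gap box). Let t ∉ R and R' = R ∪ {t}. Then the set B' obtained by removing from B every box containing t, and adding, for every dyadic box b' with t ∈ b' ⊆ b for some removed b ∈ B and every coordinate A with prefix length |b'.A| < d, the box obtained from b' by appending to b'.A the one bit that excludes t, is again a set of dyadic gap boxes of R' containing every maximal dyadic gap box of R'. -/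
/-!
A gap box of `R ∪ {t}` is exactly a gap box of `R` that avoids `t`. Such a box `b`, if maximal
for `R ∪ {t}`, is either already maximal for `R`, hence in `B`, or deleting the last bit of some
coordinate `A` gives a gap box `b'` of `R` which must contain `t`. Then `b'` lies in a maximal gap
box of `R` (so in `B`, and containing `t`), and `b` is `b'` with the bit excluding `t` appended
to `b'.A`.
-/

/-- The set of `n`-tuples of `d`-bit strings lying in the dyadic box given by
the `n`-tuple of binary prefixes `b`. -/
def BoxSet (n d : ℕ) (b : Fin n → List Bool) : Set (Fin n → List Bool) :=
  {w | ∀ i, (w i).length = d ∧ b i <+: w i}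

/-- `b` is a dyadic gap box of `R`. -/
def IsGap (n d : ℕ) (R : Set (Fin n → List Bool)) (b : Fin n → List Bool) : Prop :=
  (∀ i, (b i).length ≤ d) ∧ BoxSet n d b ∩ R = ∅

/-- `b` is a maximal dyadic gap box of `R`: deleting the last bit of any
nonempty coordinate prefix yields a box intersecting `R`. -/
def IsMaxGap (n d : ℕ) (R : Set (Fin n → List Bool)) (b : Fin n → List Bool) : Prop :=
  IsGap n d R b ∧
    ∀ A : Fin n, b A ≠ [] →
      ∃ w ∈ R, w ∈ BoxSet n d (Function.update b A (b A).dropLast)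

/-- The updated index after inserting `t`: keep the boxes of `B` not
containing `t`, and for every dyadic box `b'` with `t ∈ b' ⊆ b` for some
removed `b ∈ B` and every coordinate `A` with `|b'.A| < d`, add the box
obtained from `b'` by appending to `b'.A` the one bit that excludes `t`. -/
def insertMDBCI (n d : ℕ) (B : Set (Fin n → List Bool))
    (t : Fin n → List Bool) : Set (Fin n → List Bool) :=
  {b ∈ B | t ∉ BoxSet n d b} ∪
  {b'' | ∃ b ∈ B, t ∈ BoxSet n d b ∧
    ∃ b' : Fin n → List Bool, t ∈ BoxSet n d b' ∧ (∀ i, (b' i).length ≤ d) ∧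
      BoxSet n d b' ⊆ BoxSet n d b ∧
      ∃ A : Fin n, (b' A).length < d ∧
        b'' = Function.update b' A
          ((b' A) ++ [!((t A).getD (b' A).length false)])}


open Function

lemma not_prefix_append_not_getD (l w : List Bool) :
    ¬ l ++ [!w.getD l.length false] <+: w := by
  intro h
  have hlt : l.length < w.length := by simpa using h.length_le
  have := h.getElem (i := l.length) (by simp)
  simp [List.getElem?_eq_getElem hlt] at this

lemma eq_dropLast_append_not_getD {l w : List Bool} (hl : l ≠ []) (hpre : l.dropLast <+: w)
    (hlen : l.length ≤ w.length) (hnot : ¬ l <+: w) :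
    l = l.dropLast ++ [!w.getD l.dropLast.length false] := by
  have hlt : l.dropLast.length < w.length := by
    have := List.length_pos_iff.2 hl
    simp only [List.length_dropLast]
    omega
  conv_lhs => rw [← List.dropLast_append_getLast hl]
  congr 2
  by_contra hne
  have hlast : l.getLast hl = w.getD l.dropLast.length false := by simpa using hne
  apply hnot
  rw [← List.dropLast_append_getLast hl, hlast, List.getD_eq_getElem _ _ hlt]
  exact List.concat_get_prefix hpre hlt

variable {n d : ℕ} {R : Set (Fin n → List Bool)}

lemma boxSet_mono {b c : Fin n → List Bool} (h : ∀ i, c i <+: b i) :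
    BoxSet n d b ⊆ BoxSet n d c :=
  fun _ hw i => ⟨(hw i).1, (h i).trans (hw i).2⟩

lemma update_dropLast_prefix (b : Fin n → List Bool) (A i : Fin n) :
    update b A (b A).dropLast i <+: b i := by
  rcases eq_or_ne i A with rfl | hi
  · simpa using List.dropLast_prefix _
  · simp [update_of_ne hi]

lemma IsGap.anti {b c : Fin n → List Bool} (hb : IsGap n d R b) (hc : ∀ i, (c i).length ≤ d)
    (hcb : BoxSet n d c ⊆ BoxSet n d b) : IsGap n d R c :=
  ⟨hc, Set.eq_empty_of_subset_empty (hb.2 ▸ Set.inter_subset_inter_left R hcb)⟩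

lemma isGap_union_singleton_iff {b t : Fin n → List Bool} :
    IsGap n d (R ∪ {t}) b ↔ IsGap n d R b ∧ t ∉ BoxSet n d b := by
  simp only [IsGap, Set.inter_union_distrib_left, Set.union_empty_iff,
    Set.inter_singleton_eq_empty, and_assoc]

lemma IsGap.exists_isGap_update_dropLast {b : Fin n → List Bool} (hb : IsGap n d R b)
    (hmax : ¬ IsMaxGap n d R b) :
    ∃ A, b A ≠ [] ∧ IsGap n d R (update b A (b A).dropLast) := by
  simp only [IsMaxGap, hb, true_and, not_forall, not_exists, not_and] at hmax
  obtain ⟨A, hA, hno⟩ := hmax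
  refine ⟨A, hA, fun i => (update_dropLast_prefix b A i).length_le.trans (hb.1 i), ?_⟩
  exact Set.eq_empty_iff_forall_notMem.2 fun w ⟨hwb, hwR⟩ => hno w hwR hwb

lemma IsGap.exists_isMaxGap_prefix {b : Fin n → List Bool} (hb : IsGap n d R b) :
    ∃ c, IsMaxGap n d R c ∧ ∀ i, c i <+: b i := by
  induction hN : ∑ i, (b i).length using Nat.strong_induction_on generalizing b with
  | _ N ih =>
  by_cases hmax : IsMaxGap n d R b
  · exact ⟨b, hmax, fun _ => List.prefix_refl _⟩
  obtain ⟨A, hA, hparent⟩ := hb.exists_isGap_update_dropLast hmax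
  have hlt : ∑ i, (update b A (b A).dropLast i).length < N :=
    hN ▸ Finset.sum_lt_sum (fun i _ => (update_dropLast_prefix b A i).length_le)
      ⟨A, Finset.mem_univ _, by simpa using List.length_pos_iff.2 hA⟩
  obtain ⟨c, hc, hcb⟩ := ih _ hlt hparent rfl
  exact ⟨c, hc, fun i => (hcb i).trans (update_dropLast_prefix b A i)⟩

variable {B : Set (Fin n → List Bool)} {t : Fin n → List Bool}

lemma isGap_of_mem_insertMDBCI (hBgap : ∀ b ∈ B, IsGap n d R b) {b : Fin n → List Bool}
    (hb : b ∈ insertMDBCI n d B t) : IsGap n d (R ∪ {t}) b := by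
  rw [isGap_union_singleton_iff]
  rcases hb with ⟨hbB, htb⟩ | ⟨b₀, hb₀B, -, b', -, hb'len, hb'b₀, A, hA, rfl⟩
  · exact ⟨hBgap b hbB, htb⟩
  have hprefix : ∀ i, b' i <+: update b' A (b' A ++ [!(t A).getD (b' A).length false]) i :=
    (forall_update_iff b' fun i l => b' i <+: l).2
      ⟨List.prefix_append _ _, fun _ _ => List.prefix_refl _⟩
  have hlen : ∀ i, (update b' A (b' A ++ [!(t A).getD (b' A).length false]) i).length ≤ d :=
    (forall_update_iff b' fun _ l => l.length ≤ d).2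
      ⟨by simpa using hA, fun i _ => hb'len i⟩
  refine ⟨(hBgap b₀ hb₀B).anti hlen ((boxSet_mono hprefix).trans hb'b₀), fun htb => ?_⟩
  exact not_prefix_append_not_getD (b' A) (t A) (by simpa only [update_self] using (htb A).2)

lemma mem_insertMDBCI_of_isMaxGap (hBmax : ∀ b, IsMaxGap n d R b → b ∈ B)
    {b : Fin n → List Bool} (hb : IsMaxGap n d (R ∪ {t}) b) : b ∈ insertMDBCI n d B t := by
  obtain ⟨hbR, htb⟩ := isGap_union_singleton_iff.1 hb.1
  by_cases hmax : IsMaxGap n d R b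
  · exact Or.inl ⟨hBmax b hmax, htb⟩
  obtain ⟨A, hA, hb'R⟩ := hbR.exists_isGap_update_dropLast hmax
  set b' := update b A (b A).dropLast with hb'
  have htb' : t ∈ BoxSet n d b' := by
    obtain ⟨w, hw | rfl, hwb'⟩ := hb.2 A hA
    · exact absurd (Set.mem_inter hwb' hw) (hb'R.2 ▸ Set.notMem_empty w)
    · exact hwb'
  have hbt : ¬ b A <+: t A := fun h => htb fun i =>
    ⟨(htb' i).1, by
      rcases eq_or_ne i A with rfl | hi
      · exact h
      · simpa [b', update_of_ne hi] using (htb' i).2⟩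
  have hbA : b A = (b A).dropLast ++ [!(t A).getD (b A).dropLast.length false] :=
    eq_dropLast_append_not_getD hA (by simpa [b'] using (htb' A).2)
      ((hbR.1 A).trans (htb' A).1.ge) hbt
  obtain ⟨c, hc, hcb'⟩ := hb'R.exists_isMaxGap_prefix
  refine Or.inr ⟨c, hBmax c hc, boxSet_mono hcb' htb', b', htb', hb'R.1, boxSet_mono hcb', A,
    ?_, ?_⟩
  · have := List.length_pos_iff.2 hA
    have := hbR.1 A
    simp only [b', update_self, List.length_dropLast]
    omega
  · rw [hb', update_idem, update_self, ← hbA, update_eq_self]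

theorem stmt19_general (n d : ℕ)
    (R : Set (Fin n → List Bool))
    (t : Fin n → List Bool)
    (B : Set (Fin n → List Bool))
    (hBgap : ∀ b ∈ B, IsGap n d R b)
    (hBmax : ∀ b, IsMaxGap n d R b → b ∈ B) :
    (∀ b ∈ insertMDBCI n d B t, IsGap n d (R ∪ {t}) b) ∧
    (∀ b, IsMaxGap n d (R ∪ {t}) b → b ∈ insertMDBCI n d B t) :=
  ⟨fun _ => isGap_of_mem_insertMDBCI hBgap, fun _ => mem_insertMDBCI_of_isMaxGap hBmax⟩

/-- If `B` is a maximal dyadic box cover index of `R` (a set of dyadic gap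
boxes containing every maximal dyadic gap box) and `t ∉ R`, then the updated
set `insertMDBCI n d B t` is a set of dyadic gap boxes of `R' = R ∪ {t}`
containing every maximal dyadic gap box of `R'`. -/
theorem stmt19 (n d : ℕ) (hn : 1 ≤ n) (hd : 1 ≤ d)
    (R : Set (Fin n → List Bool)) (hRfin : R.Finite)
    (hRw : ∀ w ∈ R, ∀ i, (w i).length = d)
    (t : Fin n → List Bool) (ht : ∀ i, (t i).length = d) (htR : t ∉ R)
    (B : Set (Fin n → List Bool))
    (hBgap : ∀ b ∈ B, IsGap n d R b)
    (hBmax : ∀ b, IsMaxGap n d R b → b ∈ B) :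
    (∀ b ∈ insertMDBCI n d B t, IsGap n d (R ∪ {t}) b) ∧
    (∀ b, IsMaxGap n d (R ∪ {t}) b → b ∈ insertMDBCI n d B t) :=
  stmt19_general n d R t B hBgap hBmax
end
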